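/- The kernel of the ℂ-algebra homomorphism ℂ[y₀,y₁,y₂,y₃,y₄] → ℂ[x₀,x₁,x₂,x₃] sending y_i ↦ p_i (i = 0,…,4) is the principal ideal generated by the Igusa quartic polynomial G_I := y₄⁴ + (y₀² − y₁² − y₂² − y₃²)y₄² + y₁²y₂² + y₁²y₃² + y₂²y₃² − 2y₀y₁y₂y₃. In particular G_I(p₀,p₁,p₂,p₃,p₄) = 0. -/

import Mathlib

open MvPolynomial

/-- `p₀ := x₀⁴+x₁⁴+x₂⁴+x₃⁴`. -/
noncomputable def p0 : MvPolynomial (Fin 4) ℂ := X 0 ^ 4 + X 1 ^ 4 + X 2 ^ 4 + X 3 ^ 4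

/-- `p₁ := 2(x₀²x₁²+x₂²x₃²)`. -/
noncomputable def p1 : MvPolynomial (Fin 4) ℂ := 2 * (X 0 ^ 2 * X 1 ^ 2 + X 2 ^ 2 * X 3 ^ 2)

/-- `p₂ := 2(x₀²x₂²+x₁²x₃²)`. -/
noncomputable def p2 : MvPolynomial (Fin 4) ℂ := 2 * (X 0 ^ 2 * X 2 ^ 2 + X 1 ^ 2 * X 3 ^ 2)

/-- `p₃ := 2(x₀²x₃²+x₁²x₂²)`. -/
noncomputable def p3 : MvPolynomial (Fin 4) ℂ := 2 * (X 0 ^ 2 * X 3 ^ 2 + X 1 ^ 2 * X 2 ^ 2)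

/-- `p₄ := 4x₀x₁x₂x₃`. -/
noncomputable def p4 : MvPolynomial (Fin 4) ℂ := 4 * (X 0 * X 1 * X 2 * X 3)

/-- The `ℂ`-algebra homomorphism `ℂ[y₀,…,y₄] → ℂ[x₀,…,x₃]` sending `yᵢ ↦ pᵢ`. -/
noncomputable def φ : MvPolynomial (Fin 5) ℂ →ₐ[ℂ] MvPolynomial (Fin 4) ℂ :=
  aeval ![p0, p1, p2, p3, p4]

/-- The Igusa quartic polynomial
`G_I := y₄⁴ + (y₀² − y₁² − y₂² − y₃²)y₄² + y₁²y₂² + y₁²y₃² + y₂²y₃² − 2y₀y₁y₂y₃`. -/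
noncomputable def GI : MvPolynomial (Fin 5) ℂ :=
  X 4 ^ 4 + (X 0 ^ 2 - X 1 ^ 2 - X 2 ^ 2 - X 3 ^ 2) * X 4 ^ 2 +
    X 1 ^ 2 * X 2 ^ 2 + X 1 ^ 2 * X 3 ^ 2 + X 2 ^ 2 * X 3 ^ 2 - 2 * (X 0 * X 1 * X 2 * X 3)


/-! Sending `yᵢ ↦ pᵢ` and treating `y₄` as the variable over `ℂ[y₀,…,y₃]`, `G_I` is monic of
degree 4 in `y₄`, so by division with remainder it generates the kernel as soon as
`p₀,…,p₃` are algebraically independent and `1, p₄, p₄², p₄³` are linearly independent over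
`ℂ[p₀,…,p₃]`. Algebraic independence holds because `(p₀,…,p₃) : ℂ⁴ → ℂ⁴` is surjective.
The sign change `x₀ ↦ -x₀` fixes `p₀,…,p₃` and negates `p₄`, which separates even and odd
powers of `p₄`. Finally `p₀,…,p₃` and `p₄²` are polynomials in `uᵢ = xᵢ²`, and the reflection
`u ↦ u - ½ (u₀ + u₁ + u₂ + u₃) (1,1,1,1)` fixes the former but moves `p₄²`. -/

theorem MvPolynomial.aeval_injective_of_surjective_eval {K σ τ : Type*} [CommRing K] [IsDomain K]
    [Infinite K] (f : σ → MvPolynomial τ K)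
    (hf : Function.Surjective fun x : τ → K => fun i => eval x (f i)) :
    Function.Injective (aeval (R := K) f) := by
  refine (injective_iff_map_eq_zero _).mpr fun a ha => funext fun z => ?_
  obtain ⟨x, rfl⟩ := hf z
  have := congrArg (aeval x) ha
  rwa [comp_aeval_apply, map_zero] at this

theorem eq_zero_of_add_mul_eq_zero_of_map_eq_self {S : Type*} [CommRing S] [IsDomain S]
    (τ : S →+* S) {a b u : S} (ha : τ a = a) (hb : τ b = b) (hu : τ u ≠ u) (h : a + b * u = 0) :
    a = 0 ∧ b = 0 := by
  have hτ : a + b * τ u = 0 := by simpa [ha, hb] using congrArg τ h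
  have hb0 : b = 0 := by
    have : b * (u - τ u) = 0 := by linear_combination h - hτ
    exact (mul_eq_zero.mp this).resolve_right (sub_ne_zero.mpr hu.symm)
  exact ⟨by simpa [hb0] using h, hb0⟩

theorem Polynomial.ker_eq_span_of_monic {R S : Type*} [CommRing R] [Nontrivial R] [CommRing S]
    (F : Polynomial R →+* S) {g : Polynomial R} (hg : g.Monic) (hFg : F g = 0)
    (hF : ∀ r : Polynomial R, r.degree < g.degree → F r = 0 → r = 0) :
    RingHom.ker F = Ideal.span {g} := by
  refine le_antisymm (fun f hf => ?_) (Ideal.span_le.mpr (by simpa using hFg))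
  have hmod : f %ₘ g = 0 := by
    refine hF _ (degree_modByMonic_lt f hg) ?_
    rw [modByMonic_eq_sub_mul_div f, map_sub, map_mul, hFg, RingHom.mem_ker.mp hf]
    ring
  exact Ideal.mem_span_singleton.mpr ((modByMonic_eq_zero_iff_dvd hg).mp hmod)

noncomputable def pSq : Fin 4 → MvPolynomial (Fin 4) ℂ :=
  ![X 0 ^ 2 + X 1 ^ 2 + X 2 ^ 2 + X 3 ^ 2, 2 * (X 0 * X 1 + X 2 * X 3),
    2 * (X 0 * X 2 + X 1 * X 3), 2 * (X 0 * X 3 + X 1 * X 2)]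

noncomputable def p4Sq : MvPolynomial (Fin 4) ℂ := 16 * (X 0 * X 1 * X 2 * X 3)

theorem expand_pSq (i : Fin 4) : expand 2 (pSq i) = ![p0, p1, p2, p3] i := by
  fin_cases i <;> simp [pSq, p0, p1, p2, p3, map_ofNat]
  ring

theorem expand_p4Sq : expand 2 p4Sq = p4 ^ 2 := by
  simp [p4Sq, p4, map_ofNat]; ring

theorem surjective_eval_pSq :
    Function.Surjective fun y : Fin 4 → ℂ => fun i => eval y (pSq i) := by
  intro z
  -- `pSq 0 ± pSq 1 ± pSq 2 ± pSq 3 = (y₀ ± y₁ ± y₂ ± y₃)²` (even number of minus signs), so `y`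
  -- is the Hadamard transform of square roots of these combinations of the `z i`.
  choose sqrt hsqrt using fun w : ℂ => IsAlgClosed.exists_pow_nat_eq w two_pos
  set a := sqrt (z 0 + z 1 + z 2 + z 3)
  set b := sqrt (z 0 + z 1 - z 2 - z 3)
  set c := sqrt (z 0 - z 1 + z 2 - z 3)
  set d := sqrt (z 0 - z 1 - z 2 + z 3)
  have ha : a ^ 2 = _ := hsqrt _
  have hb : b ^ 2 = _ := hsqrt _
  have hc : c ^ 2 = _ := hsqrt _
  have hd : d ^ 2 = _ := hsqrt _
  refine ⟨![(a + b + c + d) / 4, (a + b - c - d) / 4, (a - b + c - d) / 4, (a - b - c + d) / 4],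
    funext fun i => ?_⟩
  fin_cases i <;> simp [pSq]
  · linear_combination (ha + hb + hc + hd) / 4
  · linear_combination (ha + hb - hc - hd) / 4
  · linear_combination (ha - hb + hc - hd) / 4
  · linear_combination (ha - hb - hc + hd) / 4

noncomputable def reflect : MvPolynomial (Fin 4) ℂ →ₐ[ℂ] MvPolynomial (Fin 4) ℂ :=
  aeval fun i => X i - C (1 / 2) * (X 0 + X 1 + X 2 + X 3)

theorem reflect_pSq (i : Fin 4) : reflect (pSq i) = pSq i := by
  refine funext fun x => ?_
  fin_cases i <;> simp [reflect, pSq, map_ofNat] <;> ring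

theorem reflect_aeval_pSq (a : MvPolynomial (Fin 4) ℂ) : reflect (aeval pSq a) = aeval pSq a := by
  rw [comp_aeval_apply]
  simp only [reflect_pSq]

theorem reflect_p4Sq_ne : reflect p4Sq ≠ p4Sq := by
  intro h
  have := congrArg (eval ![1, 0, 0, 0]) h
  norm_num [reflect, p4Sq, map_ofNat, Matrix.cons_val_two, Matrix.cons_val_three,
    Matrix.tail_cons, Matrix.head_cons] at this

theorem eq_zero_of_aeval_pSq_add_mul_p4Sq_eq_zero {a b : MvPolynomial (Fin 4) ℂ}
    (h : aeval pSq a + aeval pSq b * p4Sq = 0) : a = 0 ∧ b = 0 := by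
  have hinj := aeval_injective_of_surjective_eval pSq surjective_eval_pSq
  obtain ⟨ha, hb⟩ := eq_zero_of_add_mul_eq_zero_of_map_eq_self reflect.toRingHom
    (reflect_aeval_pSq a) (reflect_aeval_pSq b) reflect_p4Sq_ne h
  exact ⟨(map_eq_zero_iff _ hinj).mp ha, (map_eq_zero_iff _ hinj).mp hb⟩

/-- `zᵢ ↦ pᵢ` for `i < 4`, factored through the squares `uᵢ = xᵢ²`. -/
noncomputable def baseMap : MvPolynomial (Fin 4) ℂ →ₐ[ℂ] MvPolynomial (Fin 4) ℂ :=
  (expand 2).comp (aeval pSq)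

theorem eq_zero_of_baseMap_add_mul_p4_sq_eq_zero {a b : MvPolynomial (Fin 4) ℂ}
    (h : baseMap a + baseMap b * p4 ^ 2 = 0) : a = 0 ∧ b = 0 := by
  refine eq_zero_of_aeval_pSq_add_mul_p4Sq_eq_zero ((expand_eq_zero two_pos).mp ?_)
  simpa [baseMap, expand_p4Sq] using h

noncomputable def negX0 : MvPolynomial (Fin 4) ℂ →ₐ[ℂ] MvPolynomial (Fin 4) ℂ :=
  aeval ![-X 0, X 1, X 2, X 3]

theorem negX0_baseMap (a : MvPolynomial (Fin 4) ℂ) : negX0 (baseMap a) = baseMap a := by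
  suffices negX0.comp (expand 2) = expand 2 from congrArg (· (aeval pSq a)) this
  refine algHom_ext fun i => ?_
  fin_cases i <;> simp [negX0]

theorem negX0_p4 : negX0 p4 = -p4 := by
  simp [negX0, p4, map_ofNat]

theorem p4_ne_zero : p4 ≠ 0 := by
  intro h
  simpa [p4] using congrArg (eval 1) h

theorem eq_zero_of_baseMap_sum_mul_p4_pow_eq_zero {c₀ c₁ c₂ c₃ : MvPolynomial (Fin 4) ℂ}
    (h : baseMap c₀ + baseMap c₁ * p4 + baseMap c₂ * p4 ^ 2 + baseMap c₃ * p4 ^ 3 = 0) :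
    c₀ = 0 ∧ c₁ = 0 ∧ c₂ = 0 ∧ c₃ = 0 := by
  have hfix (a b) : negX0 (baseMap a + baseMap b * p4 ^ 2) = baseMap a + baseMap b * p4 ^ 2 := by
    simp [negX0_baseMap, negX0_p4]
  have hflip : negX0 p4 ≠ p4 := negX0_p4 ▸ neg_ne_self.mpr p4_ne_zero
  obtain ⟨heven, hodd⟩ := eq_zero_of_add_mul_eq_zero_of_map_eq_self negX0.toRingHom
    (hfix c₀ c₂) (hfix c₁ c₃) hflip (by linear_combination h)
  obtain ⟨h₀, h₂⟩ := eq_zero_of_baseMap_add_mul_p4_sq_eq_zero heven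
  obtain ⟨h₁, h₃⟩ := eq_zero_of_baseMap_add_mul_p4_sq_eq_zero hodd
  exact ⟨h₀, h₁, h₂, h₃⟩

theorem eq_zero_of_eval₂_baseMap_p4_eq_zero {r : Polynomial (MvPolynomial (Fin 4) ℂ)}
    (hr : r.degree < 4) (h : r.eval₂ (baseMap : _ →+* _) p4 = 0) : r = 0 := by
  by_contra hne
  have hn : r.natDegree < 4 := (Polynomial.natDegree_lt_iff_degree_lt hne).mpr hr
  rw [Polynomial.eval₂_eq_sum_range' _ hn] at h
  simp only [Finset.sum_range_succ, Finset.sum_range_zero, zero_add, pow_zero, mul_one, pow_one,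
    RingHom.coe_coe] at h
  obtain ⟨h₀, h₁, h₂, h₃⟩ := eq_zero_of_baseMap_sum_mul_p4_pow_eq_zero h
  refine hne ?_
  rw [Polynomial.as_sum_range' r 4 hn]
  simp [Finset.sum_range_succ, h₀, h₁, h₂, h₃]

noncomputable def y4Equiv : MvPolynomial (Fin 5) ℂ ≃ₐ[ℂ] Polynomial (MvPolynomial (Fin 4) ℂ) :=
  (renameEquiv ℂ (finSuccEquiv' (Fin.last 4))).trans (optionEquivLeft ℂ (Fin 4))

theorem y4Equiv_X_castSucc (i : Fin 4) : y4Equiv (X i.castSucc) = Polynomial.C (X i) := by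
  rw [y4Equiv, AlgEquiv.trans_apply, renameEquiv_apply, rename_X,
    finSuccEquiv'_last_apply_castSucc, optionEquivLeft_X_some]

theorem y4Equiv_X_last : y4Equiv (X 4) = Polynomial.X := by
  change y4Equiv (X (Fin.last 4)) = _
  rw [y4Equiv, AlgEquiv.trans_apply, renameEquiv_apply, rename_X, finSuccEquiv'_at,
    optionEquivLeft_X_none]

theorem φ_apply_eq_eval₂_y4Equiv (f : MvPolynomial (Fin 5) ℂ) :
    φ f = (y4Equiv f).eval₂ (baseMap : MvPolynomial (Fin 4) ℂ →+* MvPolynomial (Fin 4) ℂ) p4 := by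
  suffices φ = (Polynomial.eval₂AlgHom baseMap p4 fun _ => Commute.all _ _).comp y4Equiv from
    congrArg (· f) this
  refine algHom_ext fun i => ?_
  induction i using Fin.lastCases with
  | last => simp [φ, y4Equiv_X_last]
  | cast j =>
    simp [φ, y4Equiv_X_castSucc, baseMap, expand_pSq]
    fin_cases j <;> rfl

theorem φ_GI : φ GI = 0 := by
  simp [φ, GI, p0, p1, p2, p3, p4, map_ofNat]
  ring

theorem y4Equiv_GI : y4Equiv GI = Polynomial.X ^ 4 +
    Polynomial.C (X 0 ^ 2 - X 1 ^ 2 - X 2 ^ 2 - X 3 ^ 2) * Polynomial.X ^ 2 +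
    Polynomial.C (X 1 ^ 2 * X 2 ^ 2 + X 1 ^ 2 * X 3 ^ 2 + X 2 ^ 2 * X 3 ^ 2 -
      2 * (X 0 * X 1 * X 2 * X 3)) := by
  simp [GI, map_ofNat, ← y4Equiv_X_castSucc, y4Equiv_X_last]
  ring

theorem monic_y4Equiv_GI : (y4Equiv GI).Monic := by
  rw [y4Equiv_GI]; monicity!

theorem degree_y4Equiv_GI : (y4Equiv GI).degree = 4 := by
  rw [y4Equiv_GI]; compute_degree!

/-- The kernel of the `ℂ`-algebra homomorphism `ℂ[y₀,…,y₄] → ℂ[x₀,…,x₃]`, `yᵢ ↦ pᵢ`, is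
the principal ideal generated by the Igusa quartic `G_I`; in particular
`G_I(p₀,…,p₄) = 0`. -/
theorem kernel_is_igusa_quartic :
    RingHom.ker (φ : MvPolynomial (Fin 5) ℂ →+* MvPolynomial (Fin 4) ℂ) =
      Ideal.span {GI} ∧ φ GI = 0 := by
  refine ⟨?_, φ_GI⟩
  have hker : RingHom.ker (Polynomial.eval₂RingHom (baseMap : _ →+* _) p4) =
      Ideal.span {y4Equiv GI} := by
    refine Polynomial.ker_eq_span_of_monic _ monic_y4Equiv_GI ?_ fun r hr h =>
      eq_zero_of_eval₂_baseMap_p4_eq_zero (degree_y4Equiv_GI ▸ hr) h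
    simpa [← φ_apply_eq_eval₂_y4Equiv] using φ_GI
  ext f
  rw [RingHom.mem_ker, AlgHom.coe_toRingHom, φ_apply_eq_eval₂_y4Equiv,
    ← Polynomial.coe_eval₂RingHom, ← RingHom.mem_ker, hker, Ideal.mem_span_singleton,
    Ideal.mem_span_singleton, map_dvd_iff]
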